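/- Let V, V' be vector spaces and define morphisms 𝕍 → 𝕍' as pairs (Φ, ω) with Φ: V → V' linear and ω ∈ ∧²V*, where w = v⊕α is related to w' = v'⊕α' iff v' = Φ(v) and Φ*α' = α + ι(v)ω. Then these morphisms are isometric: if w₁ ~ w₁' and w₂ ~ w₂', then ⟨w₁, w₂⟩ = ⟨w₁', w₂'⟩. Equivalently, the graph Γ_{(Φ,ω)} = {(w', w) : w ~ w'} is a Lagrangian subspace of 𝕍' ⊕ 𝕍̄, where 𝕍̄ denotes 𝕍 with the opposite bilinear form. -/

import Mathlib

open Module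

/-- The relation `w ~_{(Φ,ω)} w'` defined by a morphism `(Φ, ω) : V ⊕ V* → V' ⊕ V'*`,
with the 2-form `ω` encoded as a skew-symmetric map `ωm : V → V*` (so `ι(v)ω = ωm v`):
`v' = Φ(v)` and `Φ*α' = α + ι(v)ω`. -/
def morphRel {K V V' : Type*} [Field K] [AddCommGroup V] [Module K V]
    [AddCommGroup V'] [Module K V']
    (Φ : V →ₗ[K] V') (ωm : V →ₗ[K] Module.Dual K V)
    (w : V × Module.Dual K V) (w' : V' × Module.Dual K V') : Prop :=
  Φ w.1 = w'.1 ∧ w'.2.comp Φ = w.2 + ωm w.1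

/-! Isometry is the identity `α₁'(Φ v₂) + α₂'(Φ v₁) = α₁ v₂ + α₂ v₁ + ω(v₁, v₂) + ω(v₂, v₁)`,
whose `ω`-terms cancel by skew-symmetry. For the Lagrangian property, pairing an element
orthogonal to the graph with the graph elements `(0 ⊕ δ, 0 ⊕ Φ*δ)` shows that `Φ v = v'`,
since covectors separate points; pairing it with `(Φ u ⊕ 0, u ⊕ -ι(u)ω)` gives
`Φ*α' = α + ι(v)ω`. -/

namespace morphRel

variable {K V V' : Type*} [Field K] [AddCommGroup V] [Module K V]
  [AddCommGroup V'] [Module K V'] {Φ : V →ₗ[K] V'} {ωm : V →ₗ[K] Dual K V}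

lemma apply_comp_apply {w : V × Dual K V} {w' : V' × Dual K V'} (h : morphRel Φ ωm w w')
    (u : V) : w'.2 (Φ u) = w.2 u + ωm w.1 u := by
  simpa using LinearMap.congr_fun h.2 u

lemma pairing_eq (halt : ωm.IsAlt) {w₁ w₂ : V × Dual K V} {w₁' w₂' : V' × Dual K V'}
    (h₁ : morphRel Φ ωm w₁ w₁') (h₂ : morphRel Φ ωm w₂ w₂') :
    w₁'.2 w₂'.1 + w₂'.2 w₁'.1 = w₁.2 w₂.1 + w₂.2 w₁.1 := by
  rw [← h₁.1, ← h₂.1, h₁.apply_comp_apply, h₂.apply_comp_apply, ← halt.neg w₁.1 w₂.1]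
  ring

variable (Φ ωm)

lemma zero_comp (δ : Dual K V') : morphRel Φ ωm (0, δ ∘ₗ Φ) (0, δ) := by
  simp [morphRel]

lemma neg_apply_self (u : V) : morphRel Φ ωm (u, -ωm u) (Φ u, 0) := by
  simp [morphRel]

variable {Φ ωm}

lemma of_forall_pairing_sub_eq_zero (halt : ωm.IsAlt)
    {z : (V' × Dual K V') × (V × Dual K V)}
    (h : ∀ z' : (V' × Dual K V') × (V × Dual K V), morphRel Φ ωm z'.2 z'.1 →
      (z.1.2 z'.1.1 + z'.1.2 z.1.1) - (z.2.2 z'.2.1 + z'.2.2 z.2.1) = 0) :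
    morphRel Φ ωm z.2 z.1 := by
  obtain ⟨⟨v', α'⟩, v, α⟩ := z
  have hv : Φ v = v' := by
    refine (sub_eq_zero.mp ((forall_dual_apply_eq_zero_iff K _).mp fun δ => ?_)).symm
    simpa [sub_eq_zero, eq_comm] using h ((0, δ), (0, δ ∘ₗ Φ)) (zero_comp Φ ωm δ)
  refine ⟨hv, LinearMap.ext fun u => ?_⟩
  have hu := h ((Φ u, 0), (u, -ωm u)) (neg_apply_self Φ ωm u)
  simp only [LinearMap.zero_apply, LinearMap.neg_apply] at hu
  simp only [LinearMap.comp_apply, LinearMap.add_apply, ← halt.neg u v]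
  linear_combination hu

end morphRel

theorem pure_spinors_stmt7_general {K V V' : Type*} [Field K]
    [AddCommGroup V] [Module K V]
    [AddCommGroup V'] [Module K V']
    (Φ : V →ₗ[K] V') (ωm : V →ₗ[K] Module.Dual K V) (halt : ∀ v, ωm v v = 0) :
    (∀ (w₁ w₂ : V × Module.Dual K V) (w₁' w₂' : V' × Module.Dual K V'),
      morphRel Φ ωm w₁ w₁' → morphRel Φ ωm w₂ w₂' →
      w₁'.2 w₂'.1 + w₂'.2 w₁'.1 = w₁.2 w₂.1 + w₂.2 w₁.1) ∧
    (∀ z : (V' × Module.Dual K V') × (V × Module.Dual K V),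
      (∀ z' : (V' × Module.Dual K V') × (V × Module.Dual K V), morphRel Φ ωm z'.2 z'.1 →
        (z.1.2 z'.1.1 + z'.1.2 z.1.1) - (z.2.2 z'.2.1 + z'.2.2 z.2.1) = 0) ↔
      morphRel Φ ωm z.2 z.1) :=
  ⟨fun _ _ _ _ h₁ h₂ => h₁.pairing_eq halt h₂,
    fun _ => ⟨morphRel.of_forall_pairing_sub_eq_zero halt,
      fun hz _ hz' => sub_eq_zero.mpr (hz.pairing_eq halt hz')⟩⟩

/-- morphisms `(Φ, ω)` are isometric: if `w₁ ~ w₁'` and `w₂ ~ w₂'` then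
`⟨w₁, w₂⟩ = ⟨w₁', w₂'⟩`; equivalently the graph `Γ_{(Φ,ω)}` is a Lagrangian subspace of
`𝕍' ⊕ 𝕍̄` (with the pairing form on `𝕍'` minus the pairing form on `𝕍`). -/
theorem pure_spinors_stmt7 {K V V' : Type*} [Field K] [CharZero K]
    [AddCommGroup V] [Module K V] [FiniteDimensional K V]
    [AddCommGroup V'] [Module K V'] [FiniteDimensional K V']
    (Φ : V →ₗ[K] V') (ωm : V →ₗ[K] Module.Dual K V) (halt : ∀ v, ωm v v = 0) :
    (∀ (w₁ w₂ : V × Module.Dual K V) (w₁' w₂' : V' × Module.Dual K V'),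
      morphRel Φ ωm w₁ w₁' → morphRel Φ ωm w₂ w₂' →
      w₁'.2 w₂'.1 + w₂'.2 w₁'.1 = w₁.2 w₂.1 + w₂.2 w₁.1) ∧
    (∀ z : (V' × Module.Dual K V') × (V × Module.Dual K V),
      (∀ z' : (V' × Module.Dual K V') × (V × Module.Dual K V), morphRel Φ ωm z'.2 z'.1 →
        (z.1.2 z'.1.1 + z'.1.2 z.1.1) - (z.2.2 z'.2.1 + z'.2.2 z.2.1) = 0) ↔
      morphRel Φ ωm z.2 z.1) :=
  pure_spinors_stmt7_general Φ ωm halt
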